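/- For any lists p, s, and y* over a type α with decidable equality, the edit distance satisfies D(p ++ s, y*) ≥ min over 0 ≤ j ≤ |y*| of D(p, y*_{<j}); i.e., the edit distance between any completion of the prefix p and the target y* is lower bounded by the minimum edit distance between p and any prefix of y*. -/

import Mathlib

namespace Levenshtein

structure Cost (α β δ : Type*) where
  delete : α → δ
  insert : β → δ
  substitute : α → β → δ

def defaultCost {α : Type*} [DecidableEq α] : Cost α α ℕ where
  delete _ := 1
  insert _ := 1
  substitute a b := if a = b then 0 else 1

def impl {α β δ : Type*} [AddZeroClass δ] [Min δ] (C : Cost α β δ) (xs : List α) (y : β)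
    (d : {r : List δ // 0 < r.length}) : {r : List δ // 0 < r.length} :=
  let ⟨ds, w⟩ := d
  xs.zip (ds.zip ds.tail) |>.foldr
    (init := ⟨[C.insert y + ds.getLast (List.ne_nil_of_length_pos w)], by simp⟩)
    (fun ⟨x, d₀, d₁⟩ ⟨r, w⟩ =>
      ⟨min (C.delete x + r[0]) (min (C.insert y + d₀) (C.substitute x y + d₁)) :: r, by simp⟩)

end Levenshtein

def suffixLevenshtein {α β δ : Type*} [AddZeroClass δ] [Min δ] (C : Levenshtein.Cost α β δ)
    (xs : List α) (ys : List β) : {r : List δ // 0 < r.length} :=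
  ys.foldr
    (Levenshtein.impl C xs)
    (xs.foldr (init := ⟨[0], by simp⟩) (fun a ⟨r, w⟩ => ⟨(C.delete a + r[0]) :: r, by simp⟩))

def levenshtein {α β δ : Type*} [AddZeroClass δ] [Min δ] (C : Levenshtein.Cost α β δ)
    (xs : List α) (ys : List β) : δ :=
  let ⟨r, _⟩ := suffixLevenshtein C xs ys
  r[0]

/-- Unit-cost Levenshtein edit distance between two lists. -/
def editDist {α : Type*} [DecidableEq α] (u v : List α) : ℕ :=
  levenshtein Levenshtein.defaultCost u v

/-- `rowMin p y = min over 0 ≤ j ≤ |y|` of the edit distance between `p` and `y.take j`. -/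
def rowMin {α : Type*} [DecidableEq α] (p y : List α) : ℕ :=
  (Finset.range (y.length + 1)).inf' (by simp) (fun j => editDist p (y.take j))

/-!
Restrict an optimal alignment of `p ++ s` with `y*` to `p`: the letters of `y*` aligned with `p`
form a prefix `y*_{<j}`, and the restricted alignment costs at most the whole one. Along the
recursion of the distance, each move (delete, insert, substitute) of an optimal alignment of
`p ++ s` is copied by the same move on `p`, the prefix of `y*` growing by one letter whenever a
letter of `y*` is consumed.
-/

-- `suffixLevenshtein C xs ys` lists the distances from the suffixes of `xs` (longest first) to
-- `ys`; `impl C xs y` computes this row for `y :: ys` from the row for `ys`.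
namespace Levenshtein

variable {α β δ : Type*} [AddZeroClass δ] [Min δ] (C : Cost α β δ)

theorem impl_nil_of_eq (y : β) {d : {r : List δ // 0 < r.length}} {a : δ} (hd : d.1 = [a]) :
    (impl C [] y d).1 = [C.insert y + a] := by
  obtain ⟨_, _⟩ := d
  subst hd
  rfl

theorem impl_cons_of_eq (x : α) (xs : List α) (y : β) {d : {r : List δ // 0 < r.length}}
    {a : δ} {ds : List δ} (hd : d.1 = a :: ds) (w : 0 < ds.length) :
    (impl C (x :: xs) y d).1 =
      min (C.delete x + (impl C xs y ⟨ds, w⟩).1[0]'(impl C xs y ⟨ds, w⟩).2)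
        (min (C.insert y + a) (C.substitute x y + ds[0])) :: (impl C xs y ⟨ds, w⟩).1 := by
  obtain ⟨_, _⟩ := d
  subst hd
  match ds, w with | _ :: _, _ => rfl

end Levenshtein

open Levenshtein

section

variable {α β δ : Type*} [AddZeroClass δ] [Min δ] (C : Cost α β δ)

theorem suffixLevenshtein_cons_right (xs : List α) (y : β) (ys : List β) :
    suffixLevenshtein C xs (y :: ys) = impl C xs y (suffixLevenshtein C xs ys) :=
  rfl

theorem levenshtein_eq_getElem_zero (xs : List α) (ys : List β) :
    levenshtein C xs ys = (suffixLevenshtein C xs ys).1[0]'(suffixLevenshtein C xs ys).2 :=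
  rfl

theorem impl_cons_suffixLevenshtein (x : α) (xs : List α) (y : β) (ys : List β)
    {d : {r : List δ // 0 < r.length}} {a : δ} (hd : d.1 = a :: (suffixLevenshtein C xs ys).1) :
    (impl C (x :: xs) y d).1 =
      min (C.delete x + levenshtein C xs (y :: ys))
        (min (C.insert y + a) (C.substitute x y + levenshtein C xs ys)) ::
        (suffixLevenshtein C xs (y :: ys)).1 :=
  impl_cons_of_eq C x xs y hd (suffixLevenshtein C xs ys).2

theorem suffixLevenshtein_nil_left (ys : List β) :
    (suffixLevenshtein C ([] : List α) ys).1 = [levenshtein C [] ys] := by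
  induction ys with
  | nil => rfl
  | cons y ys ih =>
    simp only [levenshtein_eq_getElem_zero C [] (y :: ys), suffixLevenshtein_cons_right,
      impl_nil_of_eq C y ih, List.getElem_cons_zero]

theorem suffixLevenshtein_cons_left (x : α) (xs : List α) (ys : List β) :
    (suffixLevenshtein C (x :: xs) ys).1 =
      levenshtein C (x :: xs) ys :: (suffixLevenshtein C xs ys).1 := by
  induction ys with
  | nil => rfl
  | cons y ys ih =>
    simp only [levenshtein_eq_getElem_zero C (x :: xs) (y :: ys), suffixLevenshtein_cons_right,
      impl_cons_suffixLevenshtein C x xs y ys ih, List.getElem_cons_zero]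

@[simp] theorem levenshtein_nil_nil : levenshtein C ([] : List α) ([] : List β) = 0 :=
  rfl

@[simp] theorem levenshtein_cons_nil (x : α) (xs : List α) :
    levenshtein C (x :: xs) ([] : List β) = C.delete x + levenshtein C xs [] :=
  rfl

@[simp] theorem levenshtein_nil_cons (y : β) (ys : List β) :
    levenshtein C ([] : List α) (y :: ys) = C.insert y + levenshtein C [] ys := by
  simp only [levenshtein_eq_getElem_zero C [] (y :: ys), suffixLevenshtein_cons_right,
    impl_nil_of_eq C y (suffixLevenshtein_nil_left C ys), List.getElem_cons_zero]

@[simp] theorem levenshtein_cons_cons (x : α) (xs : List α) (y : β) (ys : List β) :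
    levenshtein C (x :: xs) (y :: ys) =
      min (C.delete x + levenshtein C xs (y :: ys))
        (min (C.insert y + levenshtein C (x :: xs) ys)
          (C.substitute x y + levenshtein C xs ys)) := by
  simp only [levenshtein_eq_getElem_zero C (x :: xs) (y :: ys), suffixLevenshtein_cons_right,
    impl_cons_suffixLevenshtein C x xs y ys (suffixLevenshtein_cons_left C x xs ys),
    List.getElem_cons_zero]

end

section

variable {α β δ : Type*} [AddZeroClass δ] [LinearOrder δ] (C : Cost α β δ)

theorem levenshtein_cons_left_le (x : α) (xs : List α) (ys : List β) :
    levenshtein C (x :: xs) ys ≤ C.delete x + levenshtein C xs ys := by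
  cases ys with
  | nil => exact (levenshtein_cons_nil C x xs).le
  | cons y ys => exact (levenshtein_cons_cons C x xs y ys).trans_le (min_le_left _ _)

theorem levenshtein_cons_right_le (xs : List α) (y : β) (ys : List β) :
    levenshtein C xs (y :: ys) ≤ C.insert y + levenshtein C xs ys := by
  cases xs with
  | nil => exact (levenshtein_nil_cons C y ys).le
  | cons x xs =>
    exact (levenshtein_cons_cons C x xs y ys).trans_le
      ((min_le_right _ _).trans (min_le_left _ _))

end

theorem exists_levenshtein_take_le_levenshtein_append {α β δ : Type*} [AddCommMonoid δ]
    [LinearOrder δ] [CanonicallyOrderedAdd δ] (C : Cost α β δ) (xs zs : List α) (ys : List β) :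
    ∃ j ≤ ys.length, levenshtein C xs (ys.take j) ≤ levenshtein C (xs ++ zs) ys := by
  induction xs generalizing ys with
  | nil => exact ⟨0, Nat.zero_le _, by simp⟩
  | cons x xs ih =>
    induction ys with
    | nil =>
      obtain ⟨j, -, hj⟩ := ih []
      refine ⟨0, le_rfl, ?_⟩
      simpa using add_le_add_right hj (C.delete x)
    | cons y ys ihy =>
      obtain ⟨jd, hjd, hd⟩ := ih (y :: ys)
      obtain ⟨ji, hji, hi⟩ := ihy
      obtain ⟨js, hjs, hs⟩ := ih ys
      rw [List.cons_append, levenshtein_cons_cons]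
      rcases min_choice (C.delete x + levenshtein C (xs ++ zs) (y :: ys))
        (min (C.insert y + levenshtein C (x :: (xs ++ zs)) ys)
          (C.substitute x y + levenshtein C (xs ++ zs) ys)) with h | h <;> rw [h]
      · exact ⟨jd, hjd, (levenshtein_cons_left_le C x xs _).trans (add_le_add_right hd _)⟩
      · rcases min_choice (C.insert y + levenshtein C (x :: (xs ++ zs)) ys)
          (C.substitute x y + levenshtein C (xs ++ zs) ys) with h | h <;> rw [h]
        · refine ⟨ji + 1, by simpa using hji, ?_⟩
          rw [List.take_succ_cons]
          exact (levenshtein_cons_right_le C _ y _).trans (add_le_add_right hi _)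
        · refine ⟨js + 1, by simpa using hjs, ?_⟩
          rw [List.take_succ_cons, levenshtein_cons_cons]
          exact (min_le_right _ _).trans ((min_le_right _ _).trans (add_le_add_right hs _))

theorem completion_editDist_ge_rowMin {α : Type*} [DecidableEq α]
    (p s ystar : List α) :
    editDist (p ++ s) ystar ≥ rowMin p ystar := by
  obtain ⟨j, hj, hle⟩ := exists_levenshtein_take_le_levenshtein_append defaultCost p s ystar
  exact (Finset.inf'_le _ (Finset.mem_range_succ_iff.mpr hj)).trans hle
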